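/- Let G be a finite simple graph with at least one edge. Then c₂(G) ≠ mr(G, F₂) if and only if there exists a subgraph complementation system for G of cardinality c₂(G) in which every vertex of G appears an even number of times. -/

import Mathlib

open Matrix

/-- A subgraph complementation system for `G`: a finite collection (multiset) of subsets of
vertices such that two distinct vertices are adjacent iff they lie together in an odd
number of the sets. -/
def IsSCS {V : Type*} [DecidableEq V] (G : SimpleGraph V) (𝒞 : Multiset (Finset V)) : Prop :=
  ∀ u v : V, u ≠ v →
    (G.Adj u v ↔ Odd (Multiset.card (𝒞.filter (fun C => u ∈ C ∧ v ∈ C))))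

/-- The subgraph complementation number `c₂(G)`: the minimum cardinality of a subgraph
complementation system for `G`. -/
noncomputable def c2 {V : Type*} [DecidableEq V] (G : SimpleGraph V) : ℕ :=
  sInf {k | ∃ 𝒞 : Multiset (Finset V), IsSCS G 𝒞 ∧ Multiset.card 𝒞 = k}

/-- A symmetric matrix over `F₂` fits `G` if its off-diagonal entries record adjacency. -/
def FitsF2 {V : Type*} (G : SimpleGraph V) (A : Matrix V V (ZMod 2)) : Prop :=
  A.IsSymm ∧ ∀ u v : V, u ≠ v → (A u v = 1 ↔ G.Adj u v)

/-- The minimum rank of `G` over `F₂`: the minimum rank of a symmetric matrix over `F₂`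
that fits `G`. -/
noncomputable def mrF2 {V : Type*} [Fintype V] (G : SimpleGraph V) : ℕ :=
  sInf {k | ∃ A : Matrix V V (ZMod 2), FitsF2 G A ∧ A.rank = k}

/-!
A system `𝒞` corresponds to the matrix `∑_{C ∈ 𝒞} x_C x_Cᵀ` of its indicator vectors, which fits `G`
and has rank at most `|𝒞|`; the rank drops below `|𝒞|` when `∑ x_C = 0`, i.e. when every vertex
appears an even number of times. Conversely, over `𝔽₂` a symmetric matrix with nonzero diagonal
loses rank one when a suitable term `(Az)(Az)ᵀ` with `zᵀAz = 1` is split off, keeping a nonzero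
diagonal (or vanishing), so it is a sum of `rank A` such terms; an alternating `A ≠ 0` becomes
non-alternating after splitting off one column term, so it is a sum of `rank A + 1` terms.
Thus `mr ≤ c₂ ≤ mr + 1`, and `c₂ ≠ mr` forces a minimum-rank fitting matrix to be alternating,
whose decomposition is an optimal system with even counts.
-/

lemma ZMod.mul_self_eq_self_mod_two (a : ZMod 2) : a * a = a := by
  rw [← sq, ZMod.pow_card]

lemma ZMod.eq_zero_or_eq_one_mod_two (a : ZMod 2) : a = 0 ∨ a = 1 := by
  revert a; decide

lemma finrank_span_multiset_le_card {K E : Type*} [DivisionRing K] [AddCommGroup E] [Module K E]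
    (M : Multiset E) : Module.finrank K (Submodule.span K {x | x ∈ M}) ≤ Multiset.card M := by
  classical
  have hM : {x | x ∈ M} = (M.toFinset : Set E) := by ext; simp
  exact hM ▸ (finrank_span_finset_le_card M.toFinset).trans (Multiset.toFinset_card_le M)

namespace Matrix

variable {n R K : Type*}

noncomputable def outerSum [CommSemiring R] (M : Multiset (n → R)) : Matrix n n R :=
  (M.map fun x => vecMulVec x x).sum

section CommSemiring
variable [CommSemiring R]

@[simp] lemma outerSum_zero : outerSum (0 : Multiset (n → R)) = 0 := rfl

@[simp] lemma outerSum_cons (x : n → R) (M : Multiset (n → R)) :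
    outerSum (x ::ₘ M) = vecMulVec x x + outerSum M := by
  simp [outerSum]

@[simp] lemma outerSum_singleton (x : n → R) : outerSum {x} = vecMulVec x x := by
  simp [outerSum]

lemma isSymm_vecMulVec_self (x : n → R) : (vecMulVec x x).IsSymm := transpose_vecMulVec x x

lemma outerSum_apply (M : Multiset (n → R)) (i j : n) :
    outerSum M i j = (M.map fun x => x i * x j).sum := by
  induction M using Multiset.induction with
  | empty => simp
  | cons x M ih => simp [ih, vecMulVec_apply]

lemma isSymm_outerSum (M : Multiset (n → R)) : (outerSum M).IsSymm := by
  ext i j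
  simp [outerSum_apply, mul_comm]

variable [Fintype n]

lemma vecMulVec_self_mulVec (x w : n → R) : vecMulVec x x *ᵥ w = (x ⬝ᵥ w) • x := by
  ext i
  simp [mulVec, dotProduct, vecMulVec_apply, Finset.mul_sum, mul_comm, mul_left_comm]

lemma outerSum_mulVec_mem_span (M : Multiset (n → R)) (w : n → R) :
    outerSum M *ᵥ w ∈ Submodule.span R {x | x ∈ M} := by
  induction M using Multiset.induction with
  | empty => simp
  | cons x M ih =>
    rw [outerSum_cons, add_mulVec, vecMulVec_self_mulVec]
    refine Submodule.add_mem _ (Submodule.smul_mem _ _ (Submodule.subset_span ?_))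
      (Submodule.span_mono (fun y hy => ?_) ih)
    · exact Multiset.mem_cons_self x M
    · exact Multiset.mem_cons_of_mem hy

lemma range_outerSum_le_span (M : Multiset (n → R)) :
    LinearMap.range (outerSum M).mulVecLin ≤ Submodule.span R {x | x ∈ M} := by
  rintro _ ⟨w, rfl⟩
  exact outerSum_mulVec_mem_span M w

end CommSemiring

section Field
variable [Field K] [Fintype n]

lemma range_sub_vecMulVec_mulVec_le (A : Matrix n n K) (z : n → K) :
    LinearMap.range (A - vecMulVec (A *ᵥ z) (A *ᵥ z)).mulVecLin ≤ LinearMap.range A.mulVecLin := by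
  rintro _ ⟨w, rfl⟩
  rw [mulVecLin_apply, sub_mulVec, vecMulVec_self_mulVec]
  exact sub_mem ⟨w, rfl⟩ (Submodule.smul_mem _ _ ⟨z, rfl⟩)

lemma rank_sub_vecMulVec_mulVec_le (A : Matrix n n K) (z : n → K) :
    (A - vecMulVec (A *ᵥ z) (A *ᵥ z)).rank ≤ A.rank :=
  Submodule.finrank_mono (range_sub_vecMulVec_mulVec_le A z)

/-- Wedderburn's rank-one reduction `A ↦ A - (Az)(Az)ᵀ / (zᵀAz)`, normalised to `zᵀAz = 1`. -/
lemma IsSymm.rank_sub_vecMulVec_mulVec_add_one {A : Matrix n n K} (hA : A.IsSymm) {z : n → K}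
    (hz : z ⬝ᵥ A *ᵥ z = 1) : (A - vecMulVec (A *ᵥ z) (A *ᵥ z)).rank + 1 = A.rank := by
  set y := A *ᵥ z
  set B := A - vecMulVec y y
  have hzB : z ᵥ* B = 0 := by
    rw [vecMul_sub, vecMul_vecMulVec, hz, one_smul, ← hA, vecMul_transpose]
    exact sub_self y
  have hy : y ∉ LinearMap.range B.mulVecLin := by
    rintro ⟨w, hw⟩
    have : z ⬝ᵥ B *ᵥ w = 0 := by rw [dotProduct_mulVec, hzB, zero_dotProduct]
    rw [mulVecLin_apply] at hw
    rw [hw, hz] at this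
    exact one_ne_zero this
  have hrange :
      LinearMap.range B.mulVecLin ⊔ Submodule.span K {y} = LinearMap.range A.mulVecLin := by
    refine le_antisymm (sup_le (range_sub_vecMulVec_mulVec_le A z)
      ((Submodule.span_singleton_le_iff_mem _ _).2 ⟨z, rfl⟩)) ?_
    rintro _ ⟨w, rfl⟩
    have hAw : A *ᵥ w = B *ᵥ w + (y ⬝ᵥ w) • y := by
      rw [sub_mulVec, vecMulVec_self_mulVec, sub_add_cancel]
    rw [mulVecLin_apply, hAw]
    exact add_mem (Submodule.mem_sup_left ⟨w, rfl⟩)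
      (Submodule.mem_sup_right (Submodule.smul_mem _ _ (Submodule.mem_span_singleton_self y)))
  rw [rank, rank, ← hrange, Submodule.finrank_sup_span_singleton hy]

lemma rank_outerSum_le_card (M : Multiset (n → K)) : (outerSum M).rank ≤ Multiset.card M :=
  (Submodule.finrank_mono (range_outerSum_le_span M)).trans (finrank_span_multiset_le_card M)

lemma rank_outerSum_lt_card {M : Multiset (n → K)} (hM : M ≠ 0) (hsum : M.sum = 0) :
    (outerSum M).rank < Multiset.card M := by
  classical
  obtain ⟨x, hx⟩ := Multiset.exists_mem_of_ne_zero hM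
  set M' := M.erase x
  have hcons : M = x ::ₘ M' := (Multiset.cons_erase hx).symm
  have hx' : x = -M'.sum := by
    rw [hcons, Multiset.sum_cons] at hsum
    exact eq_neg_of_add_eq_zero_left hsum
  have hspan : Submodule.span K {y | y ∈ M} ≤ Submodule.span K {y | y ∈ M'} := by
    refine Submodule.span_le.2 fun y hy => ?_
    rw [hcons] at hy
    rcases Multiset.mem_cons.1 hy with rfl | hy
    · rw [hx']
      exact neg_mem (multiset_sum_mem _ fun z hz => Submodule.subset_span hz)
    · exact Submodule.subset_span hy
  calc (outerSum M).rank ≤ Multiset.card M' :=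
        (Submodule.finrank_mono ((range_outerSum_le_span M).trans hspan)).trans
          (finrank_span_multiset_le_card M')
    _ < Multiset.card M := by rw [hcons, Multiset.card_cons]; exact Nat.lt_succ_self _

end Field

section ZModTwo

lemma diag_outerSum (M : Multiset (n → ZMod 2)) : (outerSum M).diag = M.sum := by
  ext i
  rw [diag_apply, outerSum_apply, Pi.multiset_sum_apply]
  simp only [ZMod.mul_self_eq_self_mod_two]

lemma diag_sub_vecMulVec_self (A : Matrix n n (ZMod 2)) (y : n → ZMod 2) :
    (A - vecMulVec y y).diag = A.diag - y := by
  ext i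
  simp [vecMulVec_apply, ZMod.mul_self_eq_self_mod_two]

variable [Fintype n]

lemma IsSymm.dotProduct_mulVec_self_eq {A : Matrix n n (ZMod 2)} (hA : A.IsSymm)
    (z : n → ZMod 2) : z ⬝ᵥ A *ᵥ z = A.diag ⬝ᵥ z := by
  classical
  set f : n × n → ZMod 2 := fun p => z p.1 * A p.1 p.2 * z p.2
  have hoff : ∑ p ∈ Finset.univ.offDiag, f p = 0 := by
    refine Finset.sum_involution (fun p _ => p.swap) (fun p _ => ?_) (fun p hp _ => ?_)
      (fun p hp => by simpa [and_comm, eq_comm] using hp) (fun p _ => p.swap_swap)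
    · have hswap : f p.swap = f p := by simp only [f, Prod.fst_swap, Prod.snd_swap, hA.apply]; ring
      rw [hswap, CharTwo.add_self_eq_zero]
    · simpa [Prod.ext_iff, eq_comm] using (Finset.mem_offDiag.1 hp).2.2
  calc z ⬝ᵥ A *ᵥ z = ∑ p ∈ Finset.univ ×ˢ Finset.univ, f p := by
        rw [Finset.univ_product_univ, Fintype.sum_prod_type]
        simp [f, dotProduct, mulVec, Finset.mul_sum, mul_assoc]
    _ = ∑ i, A i i * z i := by
        rw [← Finset.diag_union_offDiag, Finset.sum_union (Finset.disjoint_diag_offDiag _), hoff,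
          add_zero, Finset.sum_diag]
        refine Finset.sum_congr rfl fun i _ => ?_
        simp only [f]
        rw [mul_comm (z i), mul_assoc, ZMod.mul_self_eq_self_mod_two]

/-- Since `zᵀAz = diag A ⬝ᵥ z`, if every `z` with `diag A ⬝ᵥ z = 1` left an alternating matrix, then
`A z = diag A` for all of them; this forces `A = (diag A)(diag A)ᵀ`, which reduces to `0`. -/
lemma IsSymm.exists_reduction_of_diag_ne_zero {A : Matrix n n (ZMod 2)} (hA : A.IsSymm) (hd : A.diag ≠ 0) :
    ∃ z, z ⬝ᵥ A *ᵥ z = 1 ∧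
      (A - vecMulVec (A *ᵥ z) (A *ᵥ z) = 0 ∨ (A - vecMulVec (A *ᵥ z) (A *ᵥ z)).diag ≠ 0) := by
  classical
  simp only [hA.dotProduct_mulVec_self_eq, diag_sub_vecMulVec_self, sub_ne_zero]
  set d := A.diag
  obtain ⟨z₀, hz₀⟩ : ∃ z, d ⬝ᵥ z = 1 := by
    obtain ⟨v, hv⟩ := Function.ne_iff.1 hd
    exact ⟨Pi.single v 1, by
      rw [dotProduct_single, mul_one]; exact (d v).eq_zero_or_eq_one_mod_two.resolve_left hv⟩
  by_cases hgood : ∃ z, d ⬝ᵥ z = 1 ∧ d ≠ A *ᵥ z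
  · obtain ⟨z, hz, hne⟩ := hgood
    exact ⟨z, hz, Or.inr hne⟩
  push Not at hgood
  have hAd : ∀ w, A *ᵥ w = (d ⬝ᵥ w) • d := by
    intro w
    rcases (d ⬝ᵥ w).eq_zero_or_eq_one_mod_two with hw | hw
    · have hw' : d ⬝ᵥ (w + z₀) = 1 := by rw [dotProduct_add, hw, hz₀, zero_add]
      rw [hw, zero_smul, ← sub_eq_zero.2 ((hgood _ hw').symm.trans (hgood _ hz₀)), mulVec_add,
        add_sub_cancel_right]
    · rw [hw, one_smul, ← hgood w hw]
  refine ⟨z₀, hz₀, Or.inl (ext_iff_mulVec.2 fun w => ?_)⟩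
  rw [← hgood z₀ hz₀, sub_mulVec, vecMulVec_self_mulVec, hAd, zero_mulVec, sub_self]

lemma IsSymm.exists_outerSum_eq_of_diag_ne_zero {A : Matrix n n (ZMod 2)} (hA : A.IsSymm)
    (hd : A.diag ≠ 0) : ∃ M, Multiset.card M ≤ A.rank ∧ outerSum M = A := by
  obtain ⟨z, hz, hB⟩ := hA.exists_reduction_of_diag_ne_zero hd
  set y := A *ᵥ z
  have hrank : (A - vecMulVec y y).rank + 1 = A.rank := hA.rank_sub_vecMulVec_mulVec_add_one hz
  have hAB : A = vecMulVec y y + (A - vecMulVec y y) := (add_sub_cancel _ _).symm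
  rcases hB with hB | hB
  · exact ⟨{y}, by simp; omega, by rw [hB, add_zero] at hAB; simp [hAB]⟩
  · obtain ⟨M, hM, hMB⟩ :=
      (hA.sub (isSymm_vecMulVec_self y)).exists_outerSum_eq_of_diag_ne_zero hB
    exact ⟨y ::ₘ M, by rw [Multiset.card_cons]; omega, by rw [outerSum_cons, hMB, ← hAB]⟩
termination_by A.rank
decreasing_by exact Nat.lt_of_succ_le (hA.rank_sub_vecMulVec_mulVec_add_one hz).le

lemma IsSymm.exists_outerSum_eq {A : Matrix n n (ZMod 2)} (hA : A.IsSymm) :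
    ∃ M, Multiset.card M ≤ A.rank + 1 ∧ outerSum M = A := by
  classical
  by_cases hd : A.diag = 0
  swap
  · obtain ⟨M, hM, hMA⟩ := hA.exists_outerSum_eq_of_diag_ne_zero hd
    exact ⟨M, hM.trans A.rank.le_succ, hMA⟩
  by_cases hA0 : A = 0
  · exact ⟨0, by simp, hA0.symm⟩
  obtain ⟨u, hu⟩ : ∃ u, A *ᵥ Pi.single u 1 ≠ 0 := by
    by_contra! h
    exact hA0 (ext_of_mulVec_single fun u => by rw [h u, zero_mulVec])
  set c := A *ᵥ Pi.single u 1
  have hB : (A - vecMulVec c c).diag ≠ 0 := by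
    rwa [diag_sub_vecMulVec_self, hd, zero_sub, neg_ne_zero]
  obtain ⟨M, hM, hMB⟩ := (hA.sub (isSymm_vecMulVec_self c)).exists_outerSum_eq_of_diag_ne_zero hB
  refine ⟨c ::ₘ M, ?_, by rw [outerSum_cons, hMB, add_sub_cancel]⟩
  rw [Multiset.card_cons]
  exact Nat.add_le_add_right (hM.trans (rank_sub_vecMulVec_mulVec_le A _)) 1

end ZModTwo

end Matrix

section MinRank
variable {V : Type*} (G : SimpleGraph V)

lemma fitsF2_adjMatrix [DecidableRel G.Adj] : FitsF2 G (G.adjMatrix (ZMod 2)) :=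
  ⟨G.isSymm_adjMatrix, fun u v _ => by by_cases h : G.Adj u v <;> simp [h]⟩

lemma mrF2_le_rank [Fintype V] {A : Matrix V V (ZMod 2)} (h : FitsF2 G A) : mrF2 G ≤ A.rank :=
  Nat.sInf_le ⟨A, h, rfl⟩

lemma exists_fitsF2_rank_eq_mrF2 [Fintype V] : ∃ A, FitsF2 G A ∧ A.rank = mrF2 G := by
  classical
  exact Nat.sInf_mem (s := {k | ∃ A, FitsF2 G A ∧ A.rank = k}) ⟨_, _, fitsF2_adjMatrix G, rfl⟩

end MinRank

section Complementation
variable {V : Type*} [DecidableEq V]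

def indicatorVec (C : Finset V) : V → ZMod 2 := fun v => if v ∈ C then 1 else 0

lemma outerSum_map_indicatorVec_apply (𝒞 : Multiset (Finset V)) (u v : V) :
    outerSum (𝒞.map indicatorVec) u v = Multiset.card (𝒞.filter fun C => u ∈ C ∧ v ∈ C) := by
  induction 𝒞 using Multiset.induction with
  | empty => simp
  | cons C 𝒞 ih =>
    rw [Multiset.map_cons, outerSum_cons, Matrix.add_apply, ih, Multiset.filter_cons]
    by_cases h : u ∈ C ∧ v ∈ C
    · simp [h, indicatorVec, vecMulVec_apply, add_comm]
    · rw [not_and_or] at h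
      rcases h with h | h <;> simp [h, indicatorVec, vecMulVec_apply]

lemma sum_map_indicatorVec_apply (𝒞 : Multiset (Finset V)) (v : V) :
    (𝒞.map indicatorVec).sum v = Multiset.card (𝒞.filter fun C => v ∈ C) := by
  rw [← diag_outerSum, diag_apply, outerSum_map_indicatorVec_apply]
  simp only [and_self]

lemma sum_map_indicatorVec_eq_zero_iff (𝒞 : Multiset (Finset V)) :
    (𝒞.map indicatorVec).sum = 0 ↔ ∀ v, Even (Multiset.card (𝒞.filter fun C => v ∈ C)) := by
  simp only [funext_iff, sum_map_indicatorVec_apply, Pi.zero_apply, ZMod.natCast_eq_zero_iff_even]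

lemma exists_map_indicatorVec_eq [Fintype V] (M : Multiset (V → ZMod 2)) :
    ∃ 𝒞 : Multiset (Finset V), 𝒞.map indicatorVec = M := by
  refine ⟨M.map fun x => Finset.univ.filter (x · = 1), ?_⟩
  rw [Multiset.map_map]
  conv_rhs => rw [← Multiset.map_id M]
  refine Multiset.map_congr rfl fun x _ => funext fun v => ?_
  rcases (x v).eq_zero_or_eq_one_mod_two with h | h <;> simp [indicatorVec, h]

lemma isSCS_iff_fitsF2 (G : SimpleGraph V) (𝒞 : Multiset (Finset V)) :
    IsSCS G 𝒞 ↔ FitsF2 G (outerSum (𝒞.map indicatorVec)) := by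
  simp only [IsSCS, FitsF2, isSymm_outerSum, true_and, outerSum_map_indicatorVec_apply,
    ZMod.natCast_eq_one_iff_odd]
  exact forall₂_congr fun u v => imp_congr_right fun _ => Iff.comm

lemma exists_isSCS_of_fitsF2_outerSum [Fintype V] {G : SimpleGraph V} {M : Multiset (V → ZMod 2)}
    (h : FitsF2 G (outerSum M)) : ∃ 𝒞, IsSCS G 𝒞 ∧ 𝒞.map indicatorVec = M := by
  obtain ⟨𝒞, rfl⟩ := exists_map_indicatorVec_eq M
  exact ⟨𝒞, (isSCS_iff_fitsF2 G 𝒞).2 h, rfl⟩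

lemma c2_le_card {G : SimpleGraph V} {𝒞 : Multiset (Finset V)} (h : IsSCS G 𝒞) :
    c2 G ≤ Multiset.card 𝒞 :=
  Nat.sInf_le ⟨𝒞, h, rfl⟩

lemma exists_isSCS_card_eq_c2 [Fintype V] (G : SimpleGraph V) :
    ∃ 𝒞, IsSCS G 𝒞 ∧ Multiset.card 𝒞 = c2 G := by
  classical
  obtain ⟨M, -, hM⟩ := (fitsF2_adjMatrix G).1.exists_outerSum_eq
  obtain ⟨𝒞, h𝒞, -⟩ := exists_isSCS_of_fitsF2_outerSum (hM ▸ fitsF2_adjMatrix G)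
  exact Nat.sInf_mem (s := {k | ∃ 𝒞, IsSCS G 𝒞 ∧ Multiset.card 𝒞 = k}) ⟨_, 𝒞, h𝒞, rfl⟩

variable [Fintype V] {G : SimpleGraph V}

lemma mrF2_le_c2 : mrF2 G ≤ c2 G := by
  obtain ⟨𝒞, h𝒞, hcard⟩ := exists_isSCS_card_eq_c2 G
  calc mrF2 G ≤ (outerSum (𝒞.map indicatorVec)).rank := mrF2_le_rank G ((isSCS_iff_fitsF2 G 𝒞).1 h𝒞)
    _ ≤ Multiset.card 𝒞 := (rank_outerSum_le_card _).trans_eq (Multiset.card_map _ _)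
    _ = c2 G := hcard

lemma c2_le_rank_of_diag_ne_zero {A : Matrix V V (ZMod 2)} (hA : FitsF2 G A) (hd : A.diag ≠ 0) :
    c2 G ≤ A.rank := by
  obtain ⟨M, hM, rfl⟩ := hA.1.exists_outerSum_eq_of_diag_ne_zero hd
  obtain ⟨𝒞, h𝒞, rfl⟩ := exists_isSCS_of_fitsF2_outerSum hA
  exact (c2_le_card h𝒞).trans ((Multiset.card_map _ _).symm.trans_le hM)

lemma exists_even_isSCS_of_diag_eq_zero {A : Matrix V V (ZMod 2)} (hA : FitsF2 G A)
    (hd : A.diag = 0) : ∃ 𝒞, IsSCS G 𝒞 ∧ Multiset.card 𝒞 ≤ A.rank + 1 ∧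
      ∀ v, Even (Multiset.card (𝒞.filter fun C => v ∈ C)) := by
  obtain ⟨M, hM, rfl⟩ := hA.1.exists_outerSum_eq
  obtain ⟨𝒞, h𝒞, rfl⟩ := exists_isSCS_of_fitsF2_outerSum hA
  rw [diag_outerSum] at hd
  exact ⟨𝒞, h𝒞, (Multiset.card_map _ _).symm.trans_le hM,
    (sum_map_indicatorVec_eq_zero_iff 𝒞).1 hd⟩

lemma mrF2_lt_card_of_even {𝒞 : Multiset (Finset V)} (hne : ∃ u v, G.Adj u v) (h𝒞 : IsSCS G 𝒞)
    (heven : ∀ v, Even (Multiset.card (𝒞.filter fun C => v ∈ C))) :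
    mrF2 G < Multiset.card 𝒞 := by
  obtain ⟨u, v, huv⟩ := hne
  have h𝒞0 : 𝒞.map indicatorVec ≠ 0 := by
    rintro h
    simpa [Multiset.map_eq_zero.1 h] using (h𝒞 u v huv.ne).1 huv
  calc mrF2 G ≤ (outerSum (𝒞.map indicatorVec)).rank := mrF2_le_rank G ((isSCS_iff_fitsF2 G 𝒞).1 h𝒞)
    _ < Multiset.card (𝒞.map indicatorVec) :=
      rank_outerSum_lt_card h𝒞0 ((sum_map_indicatorVec_eq_zero_iff 𝒞).2 heven)
    _ = Multiset.card 𝒞 := Multiset.card_map _ _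

end Complementation

theorem stmt11 {V : Type*} [Fintype V] [DecidableEq V] (G : SimpleGraph V)
    (hne : ∃ u v : V, G.Adj u v) :
    c2 G ≠ mrF2 G ↔
      ∃ 𝒞 : Multiset (Finset V), IsSCS G 𝒞 ∧ Multiset.card 𝒞 = c2 G ∧
        ∀ v : V, Even (Multiset.card (𝒞.filter (fun C => v ∈ C))) := by
  have hmr : mrF2 G ≤ c2 G := mrF2_le_c2
  constructor
  · intro hc2
    obtain ⟨B, hB, hBrank⟩ := exists_fitsF2_rank_eq_mrF2 G
    by_cases hd : B.diag = 0
    · obtain ⟨𝒞, h𝒞, hcard, heven⟩ := exists_even_isSCS_of_diag_eq_zero hB hd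
      have := c2_le_card h𝒞
      exact ⟨𝒞, h𝒞, by omega, heven⟩
    · have := c2_le_rank_of_diag_ne_zero hB hd
      omega
  · rintro ⟨𝒞, h𝒞, hcard, heven⟩
    have := mrF2_lt_card_of_even hne h𝒞 heven
    omega
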